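/- Let n be a squarefree positive integer all of whose prime factors are ≡ 1 (mod 4), with n ≡ 5 (mod 8), and let b be an even integer with b² ≡ −1 (mod n²). Then θ_{χ_n}((b+i)/(2n²)) = 0 and θ_{χ_n}((−b+i)/(2n²)) = 0; that is, both τ_n = (b+i)/(2n²) and −conj(τ_n) are zeros of θ_{χ_n}. -/

import Mathlib

open Complex

/-- `θ_{χ_n}(τ) = ∑_{k∈ℤ} (k|n) e^{2πik²τ}`. -/
noncomputable def thetaChi (n : ℕ) (τ : ℂ) : ℂ :=
  ∑' k : ℤ, (jacobiSym k n : ℂ) * Complex.exp (2 * Real.pi * Complex.I * (k : ℂ) ^ 2 * τ)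

lemma jt2_add_int_two (z τ : ℂ) (c : ℤ) :
    jacobiTheta₂ z (τ + 2 * c) = jacobiTheta₂ z τ := by
  refine tsum_congr fun k => ?_
  rw [jacobiTheta₂_term, jacobiTheta₂_term,
    show 2 * ↑Real.pi * I * k * z + ↑Real.pi * I * k ^ 2 * (τ + 2 * c)
      = (2 * ↑Real.pi * I * k * z + ↑Real.pi * I * k ^ 2 * τ) + (k ^ 2 * c : ℤ) * (2 * ↑Real.pi * I)
      by push_cast; ring,
    Complex.exp_add, Complex.exp_int_mul_two_pi_mul_I, mul_one]

lemma jt2_add_int (z τ : ℂ) (s t : ℤ) :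
    jacobiTheta₂ (z + s + t * τ) τ
      = cexp (-Real.pi * I * t ^ 2 * τ - 2 * Real.pi * I * t * z) * jacobiTheta₂ z τ := by
  have he := (Equiv.addRight t).tsum_eq
    (fun k => cexp (-Real.pi * I * t ^ 2 * τ - 2 * Real.pi * I * t * z) * jacobiTheta₂_term k z τ)
  simp only [Equiv.coe_addRight] at he
  rw [jacobiTheta₂, jacobiTheta₂, ← tsum_mul_left, ← he]
  refine tsum_congr fun k => ?_
  rw [jacobiTheta₂_term, jacobiTheta₂_term, ← Complex.exp_add,
    show 2 * ↑Real.pi * I * k * (z + s + t * τ) + ↑Real.pi * I * k ^ 2 * τ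
      = (-Real.pi * I * t ^ 2 * τ - 2 * Real.pi * I * t * z
          + (2 * ↑Real.pi * I * (k + t) * z + ↑Real.pi * I * (k + t) ^ 2 * τ))
        + (k * s : ℤ) * (2 * ↑Real.pi * I) by push_cast; ring,
    Complex.exp_add, Complex.exp_int_mul_two_pi_mul_I, mul_one]
  norm_cast

lemma jt2_I (z : ℂ) :
    jacobiTheta₂ z I = cexp (-Real.pi * z ^ 2) * jacobiTheta₂ (I * z) I := by
  have h1 : (-I * I : ℂ) = 1 := by rw [neg_mul, I_mul_I, neg_neg]
  have h2 : (-1 / I : ℂ) = I := by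
    field_simp
    rw [I_sq]
  have h3 : (z / I : ℂ) = -(I * z) := by
    field_simp
    rw [I_sq]; ring
  have h4 : (-↑Real.pi * I * z ^ 2 / I : ℂ) = -Real.pi * z ^ 2 := by
    field_simp
  rw [jacobiTheta₂_functional_equation z I, h1, one_cpow, h2, h3, h4,
    jacobiTheta₂_neg_left, one_div_one, one_mul]

lemma legendre_step {p : ℕ} (hp : p.Prime) (h4 : p % 4 = 1) {b : ℤ}
    (hd : (p : ℤ) ∣ b ^ 2 + 1) :
    jacobiSym b p = if p % 8 = 5 then -1 else 1 := by
  haveI : Fact p.Prime := ⟨hp⟩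
  have hp2' := hp.two_le
  have hp2 : 2 < p := by omega
  haveI : Fact (2 < p) := ⟨hp2⟩
  have hb2 : (b : ZMod p) ^ 2 = -1 := by
    have h0 : ((b ^ 2 + 1 : ℤ) : ZMod p) = 0 := by
      rw [ZMod.intCast_zmod_eq_zero_iff_dvd]; exact hd
    push_cast at h0
    linear_combination h0
  have hb0 : (b : ZMod p) ≠ 0 := fun h => by
    have h1 : (-1 : ZMod p) = 0 := by rw [← hb2, h]; ring
    exact one_ne_zero (neg_eq_zero.mp h1)
  have hne : (-1 : ZMod p) ≠ 1 := CharP.neg_one_ne_one (R := ZMod p) p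
  have he : ((legendreSym p b : ℤ) : ZMod p) = (b : ZMod p) ^ (p / 2) := legendreSym.eq_pow p b
  have hdiv : p / 2 = 2 * (p / 4) := by omega
  have hpow : (b : ZMod p) ^ (p / 2) = (-1 : ZMod p) ^ (p / 4) := by
    rw [hdiv, pow_mul, hb2]
  rw [← jacobiSym.legendreSym.to_jacobiSym]
  by_cases h8 : p % 8 = 5
  · rw [if_pos h8]
    have hodd : Odd (p / 4) := by rw [Nat.odd_iff]; omega
    have hv : ((legendreSym p b : ℤ) : ZMod p) = -1 := by rw [he, hpow, hodd.neg_one_pow]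
    rcases legendreSym.eq_one_or_neg_one p hb0 with h | h
    · exfalso; rw [h] at hv; push_cast at hv; exact hne hv.symm
    · exact h
  · rw [if_neg h8]
    have heven : Even (p / 4) := by rw [Nat.even_iff]; omega
    have hv : ((legendreSym p b : ℤ) : ZMod p) = 1 := by rw [he, hpow, heven.neg_one_pow]
    rcases legendreSym.eq_one_or_neg_one p hb0 with h | h
    · exact h
    · exfalso; rw [h] at hv; push_cast at hv; exact hne hv

lemma jacobi_main (b : ℤ) : ∀ n : ℕ, 0 < n → Squarefree n →
    (∀ p : ℕ, p.Prime → p ∣ n → p % 4 = 1) → ((n : ℤ) ∣ b ^ 2 + 1) →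
    jacobiSym b n = (if n % 8 = 5 then -1 else 1) ∧ n % 4 = 1 := by
  intro n
  induction n using Nat.strong_induction_on with
  | _ n ih =>
    intro hn hsf hp hd
    by_cases hn1 : n = 1
    · subst hn1; simp [jacobiSym.one_right]
    have hppr : (n.minFac).Prime := Nat.minFac_prime hn1
    set p := n.minFac with hpdef
    have hpd : p ∣ n := Nat.minFac_dvd n
    set k := n / p with hkdef
    have hk : n = p * k := (Nat.mul_div_cancel' hpd).symm
    have hkpos : 0 < k := Nat.div_pos (Nat.le_of_dvd hn hpd) hppr.pos
    have hklt : k < n := Nat.div_lt_self hn hppr.one_lt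
    have hkdvd : k ∣ n := Nat.div_dvd_of_dvd hpd
    have hksf : Squarefree k := hsf.squarefree_of_dvd hkdvd
    have hkd : (k : ℤ) ∣ b ^ 2 + 1 := dvd_trans (Int.natCast_dvd_natCast.mpr hkdvd) hd
    obtain ⟨hJk, hk4⟩ := ih k hklt hkpos hksf (fun q hq hqk => hp q hq (hqk.trans hkdvd)) hkd
    have hp4 : p % 4 = 1 := hp p hppr hpd
    have hpd' : (p : ℤ) ∣ b ^ 2 + 1 := dvd_trans (Int.natCast_dvd_natCast.mpr hpd) hd
    have hJp := legendre_step hppr hp4 hpd'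
    haveI : NeZero p := ⟨hppr.pos.ne'⟩
    haveI : NeZero k := ⟨hkpos.ne'⟩
    have hJ : jacobiSym b n = jacobiSym b p * jacobiSym b k := by
      rw [hk]; exact jacobiSym.mul_right b p k
    have hn8' : n % 8 = (p % 8) * (k % 8) % 8 := by rw [hk, Nat.mul_mod]
    have hn4 : n % 4 = 1 := by rw [hk, Nat.mul_mod, hp4, hk4]
    have hp8 : p % 8 = 1 ∨ p % 8 = 5 := by omega
    have hk8 : k % 8 = 1 ∨ k % 8 = 5 := by omega
    refine ⟨?_, hn4⟩
    rcases hp8 with h8p | h8p <;> rcases hk8 with h8k | h8k <;>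
      rw [hJ, hJp, hJk, hn8', h8p, h8k] <;> norm_num

lemma jacobi_neg_b (n : ℕ) (hn : 0 < n) (hsf : Squarefree n)
    (hp : ∀ p : ℕ, p.Prime → p ∣ n → p % 4 = 1) (hn8 : n % 8 = 5) {b : ℤ}
    (hd : (n : ℤ) ∣ b ^ 2 + 1) : jacobiSym (-b) n = -1 := by
  obtain ⟨hJ, hn4⟩ := jacobi_main b n hn hsf hp hd
  have hodd : Odd n := by rw [Nat.odd_iff]; omega
  have hneg : jacobiSym (-1 : ℤ) n = 1 := by
    rw [jacobiSym.at_neg_one hodd, ZMod.χ₄_nat_one_mod_four hn4]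
  rw [show (-b : ℤ) = (-1) * b by ring, jacobiSym.mul_left, hneg, one_mul, hJ, if_pos hn8]


/-- decomposition `k = a.val + n * j`. -/
def zmodIntEquiv (n : ℕ) [NeZero n] : ZMod n × ℤ ≃ ℤ where
  toFun p := (p.1.val : ℤ) + n * p.2
  invFun k := ((k : ZMod n), (k - ((k : ZMod n).val : ℤ)) / n)
  left_inv := by
    intro ⟨a, j⟩
    have hn : 0 < (n : ℤ) := by
      have := Nat.pos_of_ne_zero (NeZero.ne n); exact_mod_cast this
    have h1 : (((a.val : ℤ) + n * j : ℤ) : ZMod n) = a := by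
      push_cast
      simp [ZMod.natCast_val, ZMod.cast_id]
    have h2 : (((((a.val : ℤ) + n * j : ℤ) : ZMod n)).val : ℤ) = a.val := by
      rw [h1]
    refine Prod.ext h1 ?_
    simp only [h2]
    have : (a.val : ℤ) + n * j - a.val = n * j := by ring
    rw [this, Int.mul_ediv_cancel_left _ hn.ne']
  right_inv := by
    intro k
    have hn : 0 < (n : ℤ) := by
      have := Nat.pos_of_ne_zero (NeZero.ne n); exact_mod_cast this
    have hval : (((k : ZMod n)).val : ℤ) = k % n := ZMod.val_intCast k
    simp only [hval]
    have h1 : k - k % n = n * (k / n) := by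
      have := Int.mul_ediv_add_emod k n; linarith
    rw [h1, Int.mul_ediv_cancel_left _ hn.ne']
    have := Int.mul_ediv_add_emod k n
    linarith

lemma summable_theta (n : ℕ) {τ : ℂ} (hτ : 0 < τ.im) :
    Summable (fun k : ℤ => (jacobiSym k n : ℂ) * cexp (2 * Real.pi * I * (k:ℂ) ^ 2 * τ)) := by
  have h1 : Summable (fun k : ℤ => jacobiTheta₂_term k 0 (I * (2 * τ.im))) := by
    rw [summable_jacobiTheta₂_term_iff]
    simp [hτ]
  have h2 : Summable (fun k : ℤ => (jacobiTheta₂_term k 0 (I * (2 * τ.im))).re) := by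
    exact h1.map Complex.reAddGroupHom Complex.continuous_re
  refine h2.of_norm_bounded (fun k => ?_)
  have hterm : (jacobiTheta₂_term k 0 (I * (2 * τ.im))).re
      = Real.exp (-(2 * Real.pi * (k:ℝ)^2 * τ.im)) := by
    rw [jacobiTheta₂_term,
      show 2 * ↑Real.pi * I * (k:ℂ) * 0 + ↑Real.pi * I * (k:ℂ) ^ 2 * (I * (2 * τ.im))
        = ((-(2 * Real.pi * (k:ℝ)^2 * τ.im) : ℝ) : ℂ) by
          push_cast
          linear_combination (2 * (Real.pi:ℂ) * (k:ℂ)^2 * (τ.im:ℂ)) * I_sq]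
    exact Complex.exp_ofReal_re _
  rw [hterm, norm_mul]
  have hJ : ‖((jacobiSym k n : ℤ) : ℂ)‖ ≤ 1 := by
    rcases jacobiSym.trichotomy k n with h | h | h <;> rw [h] <;> norm_num
  have hexp : ‖cexp (2 * Real.pi * I * (k:ℂ) ^ 2 * τ)‖
      = Real.exp (-(2 * Real.pi * (k:ℝ)^2 * τ.im)) := by
    rw [Complex.norm_exp,
      show 2 * (Real.pi:ℂ) * I * (k:ℂ)^2 * τ = ((2*Real.pi*(k:ℝ)^2 : ℝ):ℂ) * (I*τ) by
        push_cast; ring]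
    rw [Complex.re_ofReal_mul]
    congr 1
    simp [Complex.mul_re]
  calc ‖((jacobiSym k n : ℤ) : ℂ)‖ * ‖cexp (2 * Real.pi * I * (k:ℂ) ^ 2 * τ)‖
      ≤ 1 * Real.exp (-(2 * Real.pi * (k:ℝ)^2 * τ.im)) := by
        rw [hexp]; exact mul_le_mul_of_nonneg_right hJ (Real.exp_nonneg _)
    _ = Real.exp (-(2 * Real.pi * (k:ℝ)^2 * τ.im)) := one_mul _

lemma theta_aux (n : ℕ) (hn : 0 < n) (hsf : Squarefree n)
    (hp : ∀ p : ℕ, p.Prime → p ∣ n → p % 4 = 1) (hn8 : n % 8 = 5)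
    (b : ℤ) (hb : Even b) (hbsq : ((n : ℤ) ^ 2) ∣ (b ^ 2 + 1)) :
    thetaChi n (((b : ℂ) + Complex.I) / (2 * (n : ℂ) ^ 2)) = 0 := by
  haveI : NeZero n := ⟨hn.ne'⟩
  obtain ⟨c, hc⟩ := hb
  obtain ⟨m, hm⟩ := hbsq
  have hnC : (n : ℂ) ≠ 0 := Nat.cast_ne_zero.mpr hn.ne'
  have hnd : (n : ℤ) ∣ b ^ 2 + 1 := ⟨n * m, by rw [hm]; ring⟩
  set τ₀ : ℂ := (b : ℂ) + I with hτ₀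
  have hτim : 0 < ((((b : ℂ) + I) / (2 * (n : ℂ) ^ 2)).im) := by
    rw [show (2 * (n:ℂ)^2) = ((2*(n:ℝ)^2 : ℝ) : ℂ) by push_cast; ring,
      Complex.div_ofReal_im]
    have hn' : (0:ℝ) < n := by exact_mod_cast hn
    simp only [Complex.add_im, Complex.I_im, Complex.intCast_im]
    positivity
  have hτ₀I : ∀ z : ℂ, jacobiTheta₂ z τ₀ = jacobiTheta₂ z I := by
    intro z
    rw [show τ₀ = I + 2*(c:ℂ) by rw [hτ₀]; push_cast [hc]; ring]
    exact jt2_add_int_two z I c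
  have hθ : thetaChi n (((b:ℂ)+I)/(2*(n:ℂ)^2))
      = ∑ a : ZMod n, (jacobiSym (a.val) n : ℂ)
          * cexp (Real.pi * I * (a.val:ℂ)^2 * τ₀ / (n:ℂ)^2)
          * jacobiTheta₂ ((a.val:ℂ) * τ₀ / (n:ℂ)) I := by
    rw [thetaChi, ← (zmodIntEquiv n).tsum_eq]
    have hsum2 : Summable (fun p : ZMod n × ℤ =>
        (jacobiSym ((zmodIntEquiv n) p) n : ℂ)
          * cexp (2 * Real.pi * I * (((zmodIntEquiv n) p : ℤ):ℂ)^2 * (((b:ℂ)+I)/(2*(n:ℂ)^2)))) :=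
      ((zmodIntEquiv n).summable_iff.mpr (summable_theta n hτim)).congr (fun _ => rfl)
    rw [Summable.tsum_prod hsum2, tsum_fintype]
    refine Finset.sum_congr rfl (fun a _ => ?_)
    have hstep : ∀ j : ℤ,
        (jacobiSym ((zmodIntEquiv n) (a, j)) n : ℂ)
          * cexp (2 * Real.pi * I * (((zmodIntEquiv n) (a, j) : ℤ):ℂ)^2
              * (((b:ℂ)+I)/(2*(n:ℂ)^2)))
        = ((jacobiSym (a.val) n : ℂ) * cexp (Real.pi * I * (a.val:ℂ)^2 * τ₀/(n:ℂ)^2))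
            * jacobiTheta₂_term j ((a.val:ℂ) * τ₀ / (n:ℂ)) τ₀ := by
      intro j
      show (jacobiSym ((a.val : ℤ) + n * j) n : ℂ)
          * cexp (2 * Real.pi * I * ((((a.val:ℤ) + n*j : ℤ)):ℂ)^2 * (((b:ℂ)+I)/(2*(n:ℂ)^2)))
        = _
      rw [jacobiSym.mod_left' (Int.add_mul_emod_self_left (a := (a.val:ℤ)) (b := (n:ℤ)) (c := j)),
        jacobiTheta₂_term]
      rw [mul_assoc ((jacobiSym ((a.val:ℤ)) n : ℂ)), ← Complex.exp_add]
      congr 2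
      rw [hτ₀]
      push_cast
      field_simp
      ring
    calc ∑' j : ℤ, (jacobiSym ((zmodIntEquiv n) (a, j)) n : ℂ)
          * cexp (2 * Real.pi * I * (((zmodIntEquiv n) (a, j) : ℤ):ℂ)^2
              * (((b:ℂ)+I)/(2*(n:ℂ)^2)))
        = ∑' j : ℤ, ((jacobiSym (a.val) n : ℂ)
            * cexp (Real.pi * I * (a.val:ℂ)^2 * τ₀/(n:ℂ)^2))
            * jacobiTheta₂_term j ((a.val:ℂ) * τ₀ / (n:ℂ)) τ₀ := tsum_congr hstep
      _ = ((jacobiSym (a.val) n : ℂ) * cexp (Real.pi * I * (a.val:ℂ)^2 * τ₀/(n:ℂ)^2))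
            * jacobiTheta₂ ((a.val:ℂ) * τ₀ / (n:ℂ)) τ₀ := by
          rw [tsum_mul_left]; rfl
      _ = (jacobiSym (a.val) n : ℂ) * cexp (Real.pi * I * (a.val:ℂ)^2 * τ₀/(n:ℂ)^2)
            * jacobiTheta₂ ((a.val:ℂ) * τ₀ / (n:ℂ)) I := by rw [hτ₀I]
  rw [hθ]
  set φ : ZMod n → ZMod n := fun x => (((-b : ℤ) : ZMod n)) * x with hφdef
  have hbu : (((b:ℤ)) : ZMod n)^2 = -1 := by
    have h0 : (((b^2 + 1 : ℤ)) : ZMod n) = 0 := by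
      rw [ZMod.intCast_zmod_eq_zero_iff_dvd]; exact hnd
    push_cast at h0
    linear_combination h0
  have hφbij : Function.Bijective φ := by
    refine Function.bijective_iff_has_inverse.mpr
      ⟨fun x => ((b:ℤ):ZMod n) * x, fun x => ?_, fun x => ?_⟩
    · simp only [hφdef]
      push_cast
      linear_combination (-x : ZMod n) * hbu
    · simp only [hφdef]
      push_cast
      linear_combination (-x : ZMod n) * hbu
  have hkey : ∀ a : ZMod n,
      (jacobiSym (a.val) n : ℂ) * cexp (Real.pi * I * (a.val:ℂ)^2 * τ₀ / (n:ℂ)^2)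
        * jacobiTheta₂ ((a.val:ℂ) * τ₀ / (n:ℂ)) I
      = -((jacobiSym ((φ a).val) n : ℂ)
            * cexp (Real.pi * I * ((φ a).val:ℂ)^2 * τ₀ / (n:ℂ)^2)
            * jacobiTheta₂ (((φ a).val:ℂ) * τ₀ / (n:ℂ)) I) := by
    intro a
    set α : ℤ := (a.val : ℤ) with hα
    set α' : ℤ := ((φ a).val : ℤ) with hα'
    have hcast1 : ((α : ℤ) : ZMod n) = a := by
      rw [hα]; push_cast; simp [ZMod.natCast_val, ZMod.cast_id]
    have hcast2 : ((α' : ℤ) : ZMod n) = φ a := by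
      rw [hα']; push_cast; simp [ZMod.natCast_val, ZMod.cast_id]
    have hdvd : (n:ℤ) ∣ (-b*α - α') := by
      rw [← ZMod.intCast_zmod_eq_zero_iff_dvd]
      push_cast
      rw [hcast1, hcast2]
      simp only [hφdef]
      push_cast
      ring
    obtain ⟨t, ht⟩ := hdvd
    have hα'eq : α' = -b*α - n*t := by linarith
    set s : ℤ := α*n*m + t*b with hs
    set K : ℤ := c*(t^2 - α^2*m) with hK
    have hα'C : ((α' : ℤ) : ℂ) = -((b:ℤ):ℂ)*((α:ℤ):ℂ) - (n:ℂ)*((t:ℤ):ℂ) := by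
      exact_mod_cast congrArg (fun x : ℤ => (x : ℂ)) hα'eq
    have hmC : ((b:ℤ):ℂ)^2 + 1 = ((n:ℕ):ℂ)^2 * ((m:ℤ):ℂ) := by exact_mod_cast hm
    have hcC : ((b:ℤ):ℂ) = ((c:ℤ):ℂ) + ((c:ℤ):ℂ) := by exact_mod_cast hc
    have hKC : ((K:ℤ):ℂ) = ((c:ℤ):ℂ)*(((t:ℤ):ℂ)^2 - ((α:ℤ):ℂ)^2*((m:ℤ):ℂ)) := by
      exact_mod_cast congrArg (fun x : ℤ => (x : ℂ)) hK
    have hsC : ((s:ℤ):ℂ) = ((α:ℤ):ℂ)*(n:ℂ)*((m:ℤ):ℂ) + ((t:ℤ):ℂ)*((b:ℤ):ℂ) := by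
      exact_mod_cast congrArg (fun x : ℤ => (x : ℂ)) hs
    have hJ' : (jacobiSym α' n : ℂ) = -(jacobiSym α n : ℂ) := by
      have h1 : jacobiSym α' n = jacobiSym (-b*α) n := by
        refine jacobiSym.mod_left' ?_
        rw [hα'eq, show -b*α - (n:ℤ)*t = -b*α + (n:ℤ)*(-t) by ring]
        exact Int.add_mul_emod_self_left (a := -b*α) (b := (n:ℤ)) (c := -t)
      have h2 : jacobiSym (-b*α) n = jacobiSym (-b) n * jacobiSym α n :=
        jacobiSym.mul_left _ _ n
      have h3 : jacobiSym (-b) n = -1 := jacobi_neg_b n hn hsf hp hn8 hnd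
      rw [h1, h2, h3]
      push_cast
      ring
    have hαv : ((a.val : ℕ):ℂ) = ((α:ℤ):ℂ) := by rw [hα]; push_cast; ring
    have hα'v : (((φ a).val : ℕ):ℂ) = ((α':ℤ):ℂ) := by rw [hα']; push_cast; ring
    rw [hαv, hα'v, hJ']
    conv_lhs => rw [jt2_I (((α:ℤ):ℂ) * τ₀ / (n:ℂ))]
    rw [← jacobiTheta₂_neg_left (I * (((α:ℤ):ℂ) * τ₀ / (n:ℂ))) I]
    have hz : -(I * (((α:ℤ):ℂ) * τ₀ / (n:ℂ)))
        = ((α':ℤ):ℂ) * τ₀ / (n:ℂ) + ((s:ℤ):ℂ) + ((t:ℤ):ℂ) * I := by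
      rw [hα'C, hsC, hτ₀]
      field_simp
      linear_combination (-(((α:ℤ):ℂ)) * (n:ℂ)) * I_sq + (((α:ℤ):ℂ) * (n:ℂ)) * hmC
          + (((α:ℤ):ℂ) * (1 - (n:ℂ))) * hmC - (((α:ℤ):ℂ) * (1 - (n:ℂ))) * I_sq
    rw [hz, jt2_add_int (((α':ℤ):ℂ) * τ₀ / (n:ℂ)) I s t]
    have hexpid : cexp (Real.pi * I * ((α:ℤ):ℂ)^2 * τ₀ / (n:ℂ)^2)
        * (cexp (-Real.pi * (((α:ℤ):ℂ) * τ₀ / (n:ℂ))^2)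
          * cexp (-Real.pi * I * ((t:ℤ):ℂ)^2 * I - 2*Real.pi*I*((t:ℤ):ℂ)*(((α':ℤ):ℂ) * τ₀ / (n:ℂ))))
        = cexp (Real.pi * I * ((α':ℤ):ℂ)^2 * τ₀ / (n:ℂ)^2) := by
      rw [← Complex.exp_add, ← Complex.exp_add]
      rw [show Real.pi * I * ((α:ℤ):ℂ)^2 * τ₀ / (n:ℂ)^2
          + (-Real.pi * (((α:ℤ):ℂ) * τ₀ / (n:ℂ))^2
            + (-Real.pi * I * ((t:ℤ):ℂ)^2 * I - 2*Real.pi*I*((t:ℤ):ℂ)*(((α':ℤ):ℂ) * τ₀ / (n:ℂ))))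
          = Real.pi * I * ((α':ℤ):ℂ)^2 * τ₀ / (n:ℂ)^2 + ((K:ℤ):ℂ) * (2 * Real.pi * I) by
        rw [hα'C, hKC, hcC, hτ₀]
        field_simp
        linear_combination ((Real.pi:ℂ) * ((α:ℤ):ℂ)^2 * ((b:ℤ):ℂ) * I * (n:ℂ)^2) * hmC
          - ((Real.pi:ℂ) * ((α:ℤ):ℂ)^2 * ((b:ℤ):ℂ)^2 * (n:ℂ)^2) * I_sq
          + ((Real.pi:ℂ) * (4*((α:ℤ):ℂ)^2*(n:ℂ)^2*((c:ℤ):ℂ)^2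
              - 4*((α:ℤ):ℂ)^2*(n:ℂ)^5*((c:ℤ):ℂ)^2)) * I_sq
          + ((Real.pi:ℂ) * (-2*I*((α:ℤ):ℂ)^2*(n:ℂ)^2*((c:ℤ):ℂ)
              - 2*I*((α:ℤ):ℂ)^2*(n:ℂ)^5*((c:ℤ):ℂ))) * hmC
          + ((Real.pi:ℂ) * (2*((α:ℤ):ℂ)^2*(n:ℂ)^2*((c:ℤ):ℂ) - 2*((α:ℤ):ℂ)^2*(n:ℂ)^5*((c:ℤ):ℂ)
              + ((α:ℤ):ℂ)^2*((b:ℤ):ℂ)*(n:ℂ)^2 - ((α:ℤ):ℂ)^2*((b:ℤ):ℂ)*(n:ℂ)^5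
              + I*(n:ℂ)^7*((t:ℤ):ℂ)^2 - I*((α:ℤ):ℂ)^2*(n:ℂ)^2
              + I*((α:ℤ):ℂ)^2*(n:ℂ)^4*((m:ℤ):ℂ) - I*((α:ℤ):ℂ)^2*(n:ℂ)^5
              + 2*I*((α:ℤ):ℂ)^2*((b:ℤ):ℂ)*(n:ℂ)^5*((c:ℤ):ℂ)
              - I*((α:ℤ):ℂ)^2*((b:ℤ):ℂ)^2*(n:ℂ)^2
              + 2*I^2*((α:ℤ):ℂ)^2*(n:ℂ)^2*((c:ℤ):ℂ)
              + I^2*((α:ℤ):ℂ)^2*((b:ℤ):ℂ)*(n:ℂ)^2)) * hcC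
            + ((1 - (Real.pi:ℂ)*(n:ℂ)^5) * (-2*I*((α:ℤ):ℂ)^2*((c:ℤ):ℂ))) * hmC
            + ((1 - (Real.pi:ℂ)*(n:ℂ)^5) * (-4*((α:ℤ):ℂ)^2*((c:ℤ):ℂ)^2)) * I_sq
            + ((1 - (Real.pi:ℂ)*(n:ℂ)^5) * (-I*((α:ℤ):ℂ)^2 + 2*I*((α:ℤ):ℂ)^2*((b:ℤ):ℂ)*((c:ℤ):ℂ)
                - ((α:ℤ):ℂ)^2*(((b:ℤ):ℂ) + 2*((c:ℤ):ℂ)) + I*(n:ℂ)^2*((t:ℤ):ℂ)^2)) * hcC]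
      rw [Complex.exp_add, Complex.exp_int_mul_two_pi_mul_I, mul_one]
    rw [← hexpid]
    ring
  have hS : (∑ a : ZMod n, (jacobiSym (a.val) n : ℂ) * cexp (Real.pi * I * (a.val:ℂ)^2 * τ₀ / (n:ℂ)^2)
        * jacobiTheta₂ ((a.val:ℂ) * τ₀ / (n:ℂ)) I) = 0 := by
    have h1 : (∑ a : ZMod n, (jacobiSym (a.val) n : ℂ) * cexp (Real.pi * I * (a.val:ℂ)^2 * τ₀ / (n:ℂ)^2)
        * jacobiTheta₂ ((a.val:ℂ) * τ₀ / (n:ℂ)) I)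
        = -(∑ a : ZMod n, (jacobiSym ((φ a).val) n : ℂ) * cexp (Real.pi * I * ((φ a).val:ℂ)^2 * τ₀ / (n:ℂ)^2)
        * jacobiTheta₂ (((φ a).val:ℂ) * τ₀ / (n:ℂ)) I) := by
      rw [← Finset.sum_neg_distrib]
      exact Finset.sum_congr rfl (fun a _ => hkey a)
    have h2 : (∑ a : ZMod n, (jacobiSym ((φ a).val) n : ℂ) * cexp (Real.pi * I * ((φ a).val:ℂ)^2 * τ₀ / (n:ℂ)^2)
        * jacobiTheta₂ (((φ a).val:ℂ) * τ₀ / (n:ℂ)) I)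
        = (∑ a : ZMod n, (jacobiSym (a.val) n : ℂ) * cexp (Real.pi * I * (a.val:ℂ)^2 * τ₀ / (n:ℂ)^2)
        * jacobiTheta₂ ((a.val:ℂ) * τ₀ / (n:ℂ)) I) :=
      Fintype.sum_bijective φ hφbij _ _ (fun x => rfl)
    rw [h2] at h1
    have h3 : (2:ℂ) * (∑ a : ZMod n, (jacobiSym (a.val) n : ℂ) * cexp (Real.pi * I * (a.val:ℂ)^2 * τ₀ / (n:ℂ)^2)
        * jacobiTheta₂ ((a.val:ℂ) * τ₀ / (n:ℂ)) I) = 0 := by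
      linear_combination h1
    exact (mul_eq_zero.mp h3).resolve_left two_ne_zero
  exact hS

/-- **Mock Heegner zeros**: for `n ≡ 5 (mod 8)` squarefree with all prime factors
`≡ 1 (mod 4)` and `b` even with `b² ≡ −1 (mod n²)`, both `τ_n = (b+i)/(2n²)` and
`−conj(τ_n) = (−b+i)/(2n²)` are zeros of `θ_{χ_n}`. -/
theorem thetaChi_zero_of_five_mod_eight (n : ℕ) (hn : 0 < n) (hsf : Squarefree n)
    (hp : ∀ p : ℕ, p.Prime → p ∣ n → p % 4 = 1) (hn8 : n % 8 = 5)
    (b : ℤ) (hb : Even b) (hbsq : ((n : ℤ) ^ 2) ∣ (b ^ 2 + 1)) :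
    thetaChi n (((b : ℂ) + Complex.I) / (2 * (n : ℂ) ^ 2)) = 0 ∧
    thetaChi n ((-(b : ℂ) + Complex.I) / (2 * (n : ℂ) ^ 2)) = 0 := by
  refine ⟨theta_aux n hn hsf hp hn8 b hb hbsq, ?_⟩
  have h := theta_aux n hn hsf hp hn8 (-b) hb.neg (by rwa [neg_pow, show (-1:ℤ)^2 = 1 by norm_num, one_mul])
  simpa using h
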